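/- Let A be a left brace of cardinality p^n for a prime p > 3 and a natural number n, and set c = ⌊(p − 1)/4⌋. Suppose the additive group (A, +) has rank at most c, i.e. it is a direct sum of at most c cyclic groups. Then for all a_1, a_2, …, a_c, b ∈ A one has a_1 * (a_2 * (⋯ * (a_c * b)⋯)) ∈ p·L(b), where L(b) is the left ideal of A generated by b; in particular A satisfies Property 1. -/

import Mathlib

/-- A left brace: `(A, +)` abelian group, `(A, ∘)` a group (with identity `cone`
and inverse `cinv`), satisfying `a ∘ (b + c) + a = a ∘ b + a ∘ c`. -/
class LeftBrace (A : Type*) extends AddCommGroup A where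
  circ : A → A → A
  cone : A
  cinv : A → A
  circ_assoc : ∀ a b c : A, circ (circ a b) c = circ a (circ b c)
  circ_cone : ∀ a : A, circ a cone = a
  cone_circ : ∀ a : A, circ cone a = a
  circ_cinv : ∀ a : A, circ a (cinv a) = cone
  cinv_circ : ∀ a : A, circ (cinv a) a = cone
  circ_add : ∀ a b c : A, circ a (b + c) + a = circ a b + circ a c

namespace LeftBrace

variable {A : Type*} [LeftBrace A]

/-- The brace operation `a * b = a ∘ b - a - b`. -/
def bstar (a b : A) : A := circ a b - a - b

/-- `ann (p^i) = {a : p^i • a = 0}`. -/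
def ann (p i : ℕ) : Set A := {a : A | (p ^ i : ℕ) • a = 0}

/-- `p^i • A = {p^i • a : a ∈ A}`. -/
def pA (p i : ℕ) : Set A := Set.range (fun a : A => (p ^ i : ℕ) • a)

/-- An ideal of a left brace: an additive subgroup closed under `*` on both sides. -/
def IsIdeal (I : Set A) : Prop :=
  (0 : A) ∈ I ∧ (∀ x ∈ I, ∀ y ∈ I, x + y ∈ I) ∧ (∀ x ∈ I, -x ∈ I) ∧
  (∀ a : A, ∀ x ∈ I, bstar a x ∈ I) ∧ (∀ a : A, ∀ x ∈ I, bstar x a ∈ I)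

/-- `eIter a b m = e'_m(a,b)` for `m ≥ 1`, with `eIter a b 0 = b`;
so `e'_1(a,b) = a * b` and `e'_{m+1}(a,b) = a * e'_m(a,b)`. -/
def eIter (a b : A) : ℕ → A
  | 0 => b
  | m + 1 => bstar a (eIter a b m)

/-- `circPow a j = a^{∘ j}`, the `j`-fold `∘`-product of `a` with itself. -/
def circPow (a : A) : ℕ → A
  | 0 => cone
  | j + 1 => circ a (circPow a j)

/-- Property 1 (with `c = ⌊(p-1)/4⌋`). -/
def Property1 (p : ℕ) (A : Type*) [LeftBrace A] : Prop :=
  (∀ a b : A, eIter a b ((p - 1) / 4) ∈ pA p 1) ∧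
  (∀ i : ℕ, 1 ≤ i → ∀ a : A, ∀ b ∈ ann p i, eIter a b ((p - 1) / 4) ∈ ann p (i - 1))

end LeftBrace

open LeftBrace

/-- The left ideal of a left brace generated by `b`: the smallest subset containing `b`
which is an additive subgroup and closed under `a * ·` for all `a`. -/
def leftIdealGen {A : Type*} [LeftBrace A] (b : A) : Set A :=
  ⋂₀ {S : Set A | b ∈ S ∧ (0 : A) ∈ S ∧ (∀ x ∈ S, ∀ y ∈ S, x + y ∈ S) ∧
      (∀ x ∈ S, -x ∈ S) ∧ ∀ a : A, ∀ x ∈ S, bstar a x ∈ S}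

/-- Nested left-normed product `a₁ * (a₂ * (⋯ * (aₘ * b)⋯))`. -/
def nestedMul {A : Type*} (f : A → A → A) : List A → A → A
  | [], b => b
  | a :: l, b => f a (nestedMul f l b)

namespace LeftBraceAux


/-! ### Generic folding -/

def nfold {G V : Type*} (f : G → V → V) : List G → V → V
  | [], v => v
  | g :: l, v => f g (nfold f l v)

/-! ### Quotient endomorphism action -/

section QuotAct

variable {G : Type*} {V : Type*} [Monoid G] [AddCommGroup V]

def endQuotFun (ρ : G →* AddMonoid.End V) (N : AddSubgroup V)
    (h : ∀ (g : G), ∀ v ∈ N, ρ g v ∈ N) (g : G) : AddMonoid.End (V ⧸ N) :=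
  QuotientAddGroup.map N N (ρ g) (fun v hv => h g v hv)

lemma endQuotFun_mk (ρ : G →* AddMonoid.End V) (N : AddSubgroup V)
    (h : ∀ (g : G), ∀ v ∈ N, ρ g v ∈ N) (g : G) (v : V) :
    endQuotFun ρ N h g (v : V ⧸ N) = ((ρ g v : V) : V ⧸ N) :=
  QuotientAddGroup.map_mk N N (ρ g) (fun v hv => h g v hv) v

def endQuot (ρ : G →* AddMonoid.End V) (N : AddSubgroup V)
    (h : ∀ (g : G), ∀ v ∈ N, ρ g v ∈ N) : G →* AddMonoid.End (V ⧸ N) where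
  toFun := endQuotFun ρ N h
  map_one' := AddMonoidHom.ext fun q => QuotientAddGroup.induction_on q fun v => by
    show endQuotFun ρ N h 1 (v : V ⧸ N) = (v : V ⧸ N)
    rw [endQuotFun_mk, map_one]; rfl
  map_mul' g₁ g₂ := AddMonoidHom.ext fun q => QuotientAddGroup.induction_on q fun v => by
    show endQuotFun ρ N h (g₁ * g₂) (v : V ⧸ N)
        = endQuotFun ρ N h g₁ (endQuotFun ρ N h g₂ (v : V ⧸ N))
    rw [endQuotFun_mk, endQuotFun_mk, endQuotFun_mk, map_mul]; rfl

lemma endQuot_mk (ρ : G →* AddMonoid.End V) (N : AddSubgroup V)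
    (h : ∀ (g : G), ∀ v ∈ N, ρ g v ∈ N) (g : G) (v : V) :
    endQuot ρ N h g (v : V ⧸ N) = ((ρ g v : V) : V ⧸ N) :=
  endQuotFun_mk ρ N h g v

lemma nfold_endQuot (ρ : G →* AddMonoid.End V) (N : AddSubgroup V)
    (h : ∀ (g : G), ∀ v ∈ N, ρ g v ∈ N) (l : List G) (v : V) :
    ((nfold (fun g w => ρ g w - w) l v : V) : V ⧸ N)
      = nfold (fun g q => endQuot ρ N h g q - q) l (v : V ⧸ N) := by
  induction l with
  | nil => rfl
  | cons g t ih =>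
    show ((ρ g (nfold (fun g w => ρ g w - w) t v) - nfold (fun g w => ρ g w - w) t v : V) : V ⧸ N)
      = endQuot ρ N h g (nfold (fun g q => endQuot ρ N h g q - q) t (v : V ⧸ N))
        - nfold (fun g q => endQuot ρ N h g q - q) t (v : V ⧸ N)
    rw [← ih, QuotientAddGroup.mk_sub, endQuot_mk]

end QuotAct

/-! ### Key nilpotency lemma -/

lemma nfold_eq_zero (p : ℕ) (hp : p.Prime) {G : Type*} [Group G] (hG : IsPGroup p G) :
    ∀ (m : ℕ) {V : Type*} [AddCommGroup V] [Finite V] (ρ : G →* AddMonoid.End V),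
      (∀ v : V, p • v = 0) → Nat.card V ≤ p ^ m →
      ∀ (l : List G) (v : V), l.length = m →
        nfold (fun g w => ρ g w - w) l v = 0 := by
  haveI : Fact p.Prime := ⟨hp⟩
  intro m
  induction m with
  | zero =>
    intro V _ _ ρ hexp hcard l v hl
    rw [pow_zero] at hcard
    haveI : Subsingleton V := Finite.card_le_one_iff_subsingleton.mp hcard
    exact Subsingleton.elim _ _
  | succ m ih =>
    intro V _ _ ρ hexp hcard l v hl
    rcases subsingleton_or_nontrivial V with hV | hV
    · exact Subsingleton.elim _ _
    -- the set of fixed points is an additive subgroup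
    letI : MulAction G V :=
      { smul := fun g w => ρ g w
        one_smul := fun w => by show ρ 1 w = w; rw [map_one]; rfl
        mul_smul := fun g₁ g₂ w => by show ρ (g₁ * g₂) w = ρ g₁ (ρ g₂ w); rw [map_mul]; rfl }
    let F : AddSubgroup V :=
      { carrier := {w | ∀ g : G, ρ g w = w}
        zero_mem' := fun g => map_zero (ρ g)
        add_mem' := fun {x y} hx hy g => by rw [map_add, hx g, hy g]
        neg_mem' := fun {x} hx g => by rw [map_neg, hx g] }
    have hFfix : (MulAction.fixedPoints G V : Set V) = (F : Set V) := rfl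
    -- p divides the cardinality of V
    have hpV : p ∣ Nat.card V := by
      obtain ⟨w, hw⟩ := exists_ne (0 : V)
      have h1 : addOrderOf w ∣ p := addOrderOf_dvd_of_nsmul_eq_zero (hexp w)
      rcases (Nat.Prime.eq_one_or_self_of_dvd hp _ h1) with h2 | h2
      · exact absurd (AddMonoid.addOrderOf_eq_one_iff.mp h2) hw
      · exact h2 ▸ addOrderOf_dvd_natCard w
    -- p divides the cardinality of the fixed points
    have hmod := hG.card_modEq_card_fixedPoints V
    have hpF : p ∣ Nat.card F := by
      have : Nat.card (MulAction.fixedPoints G V) ≡ 0 [MOD p] :=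
        hmod.symm.trans (Nat.modEq_zero_iff_dvd.mpr hpV)
      have hdvd := Nat.modEq_zero_iff_dvd.mp this
      rwa [show Nat.card (MulAction.fixedPoints G V) = Nat.card F from
        Nat.card_congr (Equiv.setCongr hFfix)] at hdvd
    have hFpos : 0 < Nat.card F := Nat.card_pos
    have hpleF : p ≤ Nat.card F := Nat.le_of_dvd hFpos hpF
    -- quotient
    have hpres : ∀ (g : G), ∀ w ∈ F, ρ g w ∈ F := by
      intro g w hw
      have : ρ g w = w := hw g
      rw [this]; exact hw
    set ρ' := endQuot ρ F hpres with hρ'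
    have hcardQ : Nat.card (V ⧸ F) ≤ p ^ m := by
      have h1 : Nat.card V = Nat.card (V ⧸ F) * Nat.card F :=
        AddSubgroup.card_eq_card_quotient_mul_card_addSubgroup F
      have h2 : Nat.card (V ⧸ F) * p ≤ p ^ m * p := by
        calc Nat.card (V ⧸ F) * p ≤ Nat.card (V ⧸ F) * Nat.card F :=
              Nat.mul_le_mul_left _ hpleF
          _ = Nat.card V := h1.symm
          _ ≤ p ^ (m + 1) := hcard
          _ = p ^ m * p := pow_succ p m
      exact Nat.le_of_mul_le_mul_right h2 hp.pos
    have hexpQ : ∀ q : V ⧸ F, p • q = 0 := by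
      intro q
      refine QuotientAddGroup.induction_on q ?_
      intro w
      have : ((p • w : V) : V ⧸ F) = p • (QuotientAddGroup.mk w : V ⧸ F) :=
        map_nsmul (QuotientAddGroup.mk' F) p w
      rw [← this, hexp w]
      rfl
    -- split the list
    cases l with
    | nil => simp at hl
    | cons g t =>
      have ht : t.length = m := by simpa using hl
      have hq := ih ρ' hexpQ hcardQ t (QuotientAddGroup.mk v) ht
      rw [← nfold_endQuot ρ F hpres t v] at hq
      have hmem : nfold (fun g w => ρ g w - w) t v ∈ F :=
        (QuotientAddGroup.eq_zero_iff _).mp hq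
      show ρ g (nfold (fun g w => ρ g w - w) t v) - nfold (fun g w => ρ g w - w) t v = 0
      rw [hmem g, sub_self]




open LeftBrace

variable {A : Type*} [LeftBrace A]

lemma circ_zero (a : A) : circ a (0 : A) = a := by
  have h := circ_add a 0 0
  rw [add_zero] at h
  exact (add_left_cancel h).symm

lemma cone_eq_zero : (cone : A) = 0 := by
  have h1 : circ (cone : A) 0 = (0 : A) := cone_circ 0
  have h2 : circ (cone : A) 0 = (cone : A) := circ_zero cone
  rw [h1] at h2
  exact h2.symm

/-- The lambda map `λ_a(x) = a ∘ x - a`, as an additive homomorphism. -/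
def lam (a : A) : A →+ A :=
  AddMonoidHom.mk' (fun x => circ a x - a) (by
    intro x y
    show circ a (x + y) - a = (circ a x - a) + (circ a y - a)
    have h := circ_add a x y
    rw [eq_sub_of_add_eq h]
    abel)

lemma lam_apply (a x : A) : lam a x = circ a x - a := rfl

lemma bstar_eq_lam (a x : A) : bstar a x = lam a x - x := rfl

lemma lam_circ (a b x : A) : lam (circ a b) x = lam a (lam b x) := by
  rw [lam_apply, lam_apply b, map_sub, lam_apply, lam_apply, circ_assoc]
  abel

lemma lam_cone (x : A) : lam (cone : A) x = x := by
  rw [lam_apply, cone_circ, cone_eq_zero, sub_zero]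

/-- Type synonym carrying the multiplicative group `(A, ∘)`. -/
def Circ (A : Type*) := A

/-- The identity map from `Circ A` to `A`. -/
def unC (a : Circ A) : A := a

/-- The identity map from `A` to `Circ A`. -/
def toC (a : A) : Circ A := a

instance : Group (Circ A) where
  mul a b := toC (circ (unC a) (unC b))
  one := toC cone
  inv a := toC (cinv (unC a))
  mul_assoc a b c := circ_assoc (unC a) (unC b) (unC c)
  one_mul a := cone_circ (unC a)
  mul_one a := circ_cone (unC a)
  inv_mul_cancel a := cinv_circ (unC a)

lemma circ_mul_def (a b : Circ A) : unC (a * b) = circ (unC a) (unC b) := rfl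
lemma circ_one_def : unC (1 : Circ A) = (cone : A) := rfl

/-- The left ideal generated by `b`, as an additive subgroup. -/
def LIsub (b : A) : AddSubgroup A where
  carrier := leftIdealGen b
  zero_mem' := fun S hS => hS.2.1
  add_mem' := fun {x y} hx hy S hS => hS.2.2.1 x (hx S hS) y (hy S hS)
  neg_mem' := fun {x} hx S hS => hS.2.2.2.1 x (hx S hS)

lemma self_mem_LIsub (b : A) : b ∈ LIsub b := fun S hS => hS.1

lemma bstar_mem_LIsub (b : A) (a : A) {x : A} (hx : x ∈ LIsub b) :
    bstar a x ∈ LIsub b := fun S hS => hS.2.2.2.2 a x (hx S hS)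

lemma lam_mem_LIsub (b : A) (a : A) {x : A} (hx : x ∈ LIsub b) :
    lam a x ∈ LIsub b := by
  have h : lam a x = bstar a x + x := by rw [bstar_eq_lam]; abel
  rw [h]
  exact (LIsub b).add_mem (bstar_mem_LIsub b a hx) hx

lemma LIsub_le_ann (b : A) (k : ℕ) (hb : k • b = 0) :
    ∀ x ∈ LIsub b, k • x = 0 := by
  intro x hx
  refine hx {z : A | k • z = 0} ?_
  refine ⟨hb, smul_zero k, ?_, ?_, ?_⟩
  · intro u hu v hv
    show k • (u + v) = 0
    rw [smul_add, hu, hv, add_zero]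
  · intro u hu
    show k • (-u) = 0
    rw [smul_neg, hu, neg_zero]
  · intro a u hu
    show k • bstar a u = 0
    have hu' : k • u = 0 := hu
    rw [bstar_eq_lam, smul_sub, ← map_nsmul (lam a) k u, hu', map_zero, sub_zero]

/-- The lambda action on `LIsub b` as an endomorphism, for each `a`. -/
def lamEndFun (b : A) (a : Circ A) : AddMonoid.End (LIsub b) :=
  AddMonoidHom.codRestrict (((lam (unC a)).comp (LIsub b).subtype)) (LIsub b)
    (fun x => lam_mem_LIsub b (unC a) x.2)

lemma lamEndFun_coe (b : A) (a : Circ A) (x : LIsub b) :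
    ((lamEndFun b a x : LIsub b) : A) = lam (unC a) (x : A) := rfl

/-- The lambda action on the left ideal generated by `b`, as a monoid homomorphism
from the circle group into the endomorphisms. -/
def lamEnd (b : A) : Circ A →* AddMonoid.End (LIsub b) where
  toFun := lamEndFun b
  map_one' := AddMonoidHom.ext fun x => Subtype.ext (by
    show lam (unC (1 : Circ A)) (x : A) = (x : A)
    rw [circ_one_def, lam_cone])
  map_mul' a₁ a₂ := AddMonoidHom.ext fun x => Subtype.ext (by
    show lam (unC (a₁ * a₂)) (x : A) = lam (unC a₁) (lam (unC a₂) (x : A))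
    rw [circ_mul_def, lam_circ])

lemma lamEnd_coe (b : A) (a : Circ A) (x : LIsub b) :
    ((lamEnd b a x : LIsub b) : A) = lam (unC a) (x : A) := rfl

/-- Cardinality bound for `p`-torsion of a cyclic group `ZMod d`. -/
lemma card_torsion_zmod_le (p d : ℕ) (hp : p.Prime) (hd : 0 < d) :
    Nat.card {z : ZMod d // p • z = 0} ≤ p := by
  haveI : NeZero d := ⟨hd.ne'⟩
  let S : AddSubgroup (ZMod d) :=
    { carrier := {z | p • z = 0}
      zero_mem' := smul_zero p
      add_mem' := fun {u v} hu hv => by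
        show p • (u + v) = 0
        rw [smul_add, hu, hv, add_zero]
      neg_mem' := fun {u} hu => by
        show p • (-u) = 0
        rw [smul_neg, hu, neg_zero] }
  have hcongr : Nat.card {z : ZMod d // p • z = 0} = Nat.card S := rfl
  rw [hcongr]
  haveI : IsAddCyclic S := AddSubgroup.isAddCyclic S
  have hdvd : AddMonoid.exponent S ∣ p := by
    rw [AddMonoid.exponent_dvd_iff_forall_nsmul_eq_zero]
    intro g
    apply Subtype.ext
    have : ((p • g : S) : ZMod d) = p • (g : ZMod d) := map_nsmul S.subtype p g
    rw [this]
    exact g.2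
  rw [IsAddCyclic.exponent_eq_card] at hdvd
  exact Nat.le_of_dvd hp.pos hdvd


end LeftBraceAux

open LeftBraceAux

theorem statement13 {A : Type*} [LeftBrace A] [Fintype A] (p n : ℕ) (hp : p.Prime)
    (hp3 : 3 < p) (hcard : Fintype.card A = p ^ n)
    (ι : Type) [Fintype ι] (hι : Fintype.card ι ≤ (p - 1) / 4)
    (d : ι → ℕ) (hd : ∀ i : ι, 0 < d i)
    (e : A ≃+ ((i : ι) → ZMod (d i))) :
    (∀ (l : List A) (b : A), l.length = (p - 1) / 4 →
      ∃ y ∈ leftIdealGen b, nestedMul bstar l b = p • y) ∧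
    Property1 p A := by
  classical
  set c := (p - 1) / 4 with hc
  haveI : Fact p.Prime := ⟨hp⟩
  haveI : ∀ i : ι, NeZero (d i) := fun i => ⟨(hd i).ne'⟩
  -- the main claim
  have main : ∀ (l : List A) (b : A), l.length = c →
      ∃ y ∈ leftIdealGen b, nestedMul bstar l b = p • y := by
    intro l b hl
    set M : AddSubgroup A := LIsub b with hM
    set smulp : M →+ M := AddMonoidHom.mk' (fun x => p • x) (fun x y => smul_add p x y)
      with hsmulp
    set pM : AddSubgroup M := smulp.range with hpM
    have hpres : ∀ (g : Circ A), ∀ v ∈ pM, lamEnd b g v ∈ pM := by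
      intro g v hv
      obtain ⟨y, hy⟩ := hv
      refine ⟨lamEnd b g y, ?_⟩
      show p • (lamEnd b g y) = lamEnd b g v
      rw [← hy]
      exact (map_nsmul (lamEnd b g) p y).symm
    set ρ : Circ A →* AddMonoid.End (M ⧸ pM) := endQuot (lamEnd b) pM hpres with hρ
    have hPG : IsPGroup p (Circ A) := IsPGroup.of_card
      (by rw [show Nat.card (Circ A) = Nat.card A from rfl, Nat.card_eq_fintype_card, hcard])
    have hexpQ : ∀ q : M ⧸ pM, p • q = 0 := by
      intro q
      refine QuotientAddGroup.induction_on q ?_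
      intro x
      have h1 : ((p • x : M) : M ⧸ pM) = p • ((x : M) : M ⧸ pM) :=
        map_nsmul (QuotientAddGroup.mk' pM) p x
      rw [← h1]
      exact (QuotientAddGroup.eq_zero_iff _).mpr ⟨x, rfl⟩
    have hcardQ : Nat.card (M ⧸ pM) ≤ p ^ c := by
      have h1 : Nat.card M = Nat.card (M ⧸ pM) * Nat.card pM :=
        AddSubgroup.card_eq_card_quotient_mul_card_addSubgroup pM
      have h2 : Nat.card (M ⧸ smulp.ker) = Nat.card pM :=
        Nat.card_congr (QuotientAddGroup.quotientKerEquivRange smulp).toEquiv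
      have h3 : Nat.card M = Nat.card (M ⧸ smulp.ker) * Nat.card smulp.ker :=
        AddSubgroup.card_eq_card_quotient_mul_card_addSubgroup smulp.ker
      have hposM : 0 < Nat.card pM := Nat.card_pos
      have h4 : Nat.card (M ⧸ pM) * Nat.card pM = Nat.card smulp.ker * Nat.card pM := by
        rw [← h1, h3, h2, Nat.mul_comm]
      have h5 : Nat.card (M ⧸ pM) = Nat.card smulp.ker :=
        Nat.eq_of_mul_eq_mul_right hposM h4
      have hK : Nat.card smulp.ker ≤ p ^ c := by
        have hinjA : Function.Injective (fun x : smulp.ker => (((x : M) : A))) := by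
          intro x y hxy
          exact Subtype.ext (Subtype.ext hxy)
        have hzero : ∀ x : smulp.ker, p • (((x : M) : A)) = 0 := by
          intro x
          have hx : smulp (x : M) = 0 := x.2
          have : ((p • (x : M) : M) : A) = p • (((x : M) : A)) :=
            map_nsmul M.subtype p (x : M)
          rw [← this]
          rw [show (p • (x : M) : M) = smulp (x : M) from rfl, hx]
          rfl
        let T : ι → Type _ := fun i => {z : ZMod (d i) // p • z = 0}
        let φ : smulp.ker → ∀ i, T i := fun x => fun i =>
          ⟨e (((x : M) : A)) i, by
            have he : p • (e (((x : M) : A))) = 0 := by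
              rw [← map_nsmul e p _, hzero x, map_zero]
            exact congrFun he i⟩
        have hφinj : Function.Injective φ := by
          intro x y hxy
          apply Subtype.ext
          apply Subtype.ext
          apply e.injective
          funext i
          exact congrArg Subtype.val (congrFun hxy i)
        calc Nat.card smulp.ker ≤ Nat.card (∀ i, T i) :=
              Nat.card_le_card_of_injective φ hφinj
          _ = ∏ i, Nat.card (T i) := Nat.card_pi
          _ ≤ ∏ _i : ι, p :=
              Finset.prod_le_prod' (fun i _ => card_torsion_zmod_le p (d i) hp (hd i))
          _ = p ^ Fintype.card ι := by rw [Finset.prod_const, Finset.card_univ]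
          _ ≤ p ^ c := Nat.pow_le_pow_right hp.one_lt.le hι
      rw [h5]
      exact hK
    -- folding inside M
    set fM : A → M → M := fun a x => ⟨bstar a (x : A), bstar_mem_LIsub b a x.2⟩ with hfMdef
    have hcoe : ∀ (l : List A) (x : M),
        ((nfold fM l x : M) : A) = nestedMul bstar l (x : A) := by
      intro l
      induction l with
      | nil => intro x; rfl
      | cons a t ih =>
        intro x
        show bstar a ((nfold fM t x : M) : A) = bstar a (nestedMul bstar t (x : A))
        rw [ih]
    set f2 : Circ A → M → M := fun g w => lamEnd b g w - w with hf2
    have hfM : ∀ (l : List A) (x : M), nfold fM l x = nfold f2 l x := by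
      intro l
      induction l with
      | nil => intro x; rfl
      | cons a t ih =>
        intro x
        show fM a (nfold fM t x) = f2 a (nfold f2 t x)
        rw [ih]
        apply Subtype.ext
        show bstar a ((nfold f2 t x : M) : A) = ((lamEnd b a (nfold f2 t x) - nfold f2 t x : M) : A)
        rw [AddSubgroup.coe_sub]
        exact bstar_eq_lam a _
    set xb : M := ⟨b, self_mem_LIsub b⟩ with hxb
    have hzero : ((nfold fM l xb : M) : M ⧸ pM) = 0 := by
      rw [hfM l xb]
      rw [nfold_endQuot (lamEnd b) pM hpres l xb]
      exact nfold_eq_zero p hp hPG c ρ hexpQ hcardQ l ((xb : M) : M ⧸ pM) hl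
    have hmem : nfold fM l xb ∈ pM := (QuotientAddGroup.eq_zero_iff _).mp hzero
    obtain ⟨y, hy⟩ := hmem
    refine ⟨(y : A), y.2, ?_⟩
    have h6 : nestedMul bstar l b = ((nfold fM l xb : M) : A) := (hcoe l xb).symm
    rw [h6, ← hy]
    show ((p • y : M) : A) = p • (y : A)
    exact map_nsmul M.subtype p y
  -- relating eIter to nestedMul
  have rep : ∀ (a b : A) (m : ℕ), eIter a b m = nestedMul bstar (List.replicate m a) b := by
    intro a b m
    induction m with
    | zero => rfl
    | succ m ih =>
      show bstar a (eIter a b m) = bstar a (nestedMul bstar (List.replicate m a) b)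
      rw [ih]
  refine ⟨main, ?_, ?_⟩
  · intro a b
    obtain ⟨y, hy, hEq⟩ := main (List.replicate c a) b (by simp)
    refine ⟨y, ?_⟩
    show (p ^ 1 : ℕ) • y = eIter a b c
    rw [pow_one, rep a b c, hEq]
  · intro i hi a b hb
    obtain ⟨y, hy, hEq⟩ := main (List.replicate c a) b (by simp)
    show (p ^ (i - 1) : ℕ) • eIter a b c = 0
    rw [rep a b c, hEq]
    have hyann : (p ^ i : ℕ) • y = 0 := LIsub_le_ann b (p ^ i) hb y hy
    have hpow : (p : ℕ) ^ (i - 1) * p = p ^ i := by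
      rw [← pow_succ]
      congr 1
      omega
    rw [smul_smul, hpow, hyann]
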